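/- arXiv:1304.3955 — 7 statements merged into one kernel-verified Lean document; each statement's English description precedes it below -/
import Mathlib

section
/- If p is a rapid ultrafilter on ℕ and g : ℕ → ℕ is a finite-to-one function, then the pushforward ultrafilter g(p) = {A ⊆ ℕ : g⁻¹(A) ∈ p} is rapid. -/
def Rapid (p : Ultrafilter ℕ) : Prop :=
  ∀ f : ℕ → ℕ, ∃ A ∈ p, ∀ i : ℕ, 0 < i → ((A : Set ℕ) ∩ Set.Iio (f i)).ncard < i

theorem stmt_1 (p : Ultrafilter ℕ) (g : ℕ → ℕ)
    (hg : ∀ n : ℕ, (g ⁻¹' {n}).Finite) (hp : Rapid p) :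
    Rapid (p.map g) := by
  intro f
  have hfin : ∀ i, (g ⁻¹' Set.Iio (f i)).Finite := by
    intro i
    have : g ⁻¹' Set.Iio (f i) = ⋃ n ∈ Set.Iio (f i), g ⁻¹' {n} := by
      ext x; simp
    rw [this]
    exact (Set.finite_Iio _).biUnion (fun n _ => hg n)
  have hbd : ∀ i, ∃ N, g ⁻¹' Set.Iio (f i) ⊆ Set.Iio N := by
    intro i
    obtain ⟨N, hN⟩ := (hfin i).bddAbove
    exact ⟨N + 1, fun x hx => Nat.lt_succ_of_le (hN hx)⟩
  choose F hF using hbd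
  obtain ⟨A, hA, hcard⟩ := hp F
  refine ⟨g '' A, ?_, ?_⟩
  · exact Ultrafilter.mem_map.2 (p.sets_of_superset hA (Set.subset_preimage_image g A))
  · intro i hi
    have hsub : g '' A ∩ Set.Iio (f i) ⊆ g '' (A ∩ Set.Iio (F i)) := by
      rintro y ⟨⟨x, hxA, rfl⟩, hy⟩
      exact ⟨x, ⟨hxA, hF i hy⟩, rfl⟩
    have hAfin : (A ∩ Set.Iio (F i)).Finite :=
      (Set.finite_Iio _).subset Set.inter_subset_right
    calc (g '' A ∩ Set.Iio (f i)).ncard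
        ≤ (g '' (A ∩ Set.Iio (F i))).ncard :=
          Set.ncard_le_ncard hsub (hAfin.image g)
      _ ≤ (A ∩ Set.Iio (F i)).ncard := Set.ncard_image_le hAfin
      _ < i := hcard i hi
end

section
/- If p is a rapid ultrafilter on ℕ and q is any ultrafilter on ℕ, then the tensor product ultrafilter q ⊗ p on ℕ × ℕ is rapid with respect to the map (m,n) ↦ m + n; that is, for every f : ℕ → ℕ there exists a set S ∈ q ⊗ p such that for all i, |{(m,n) ∈ S : m + n < f(i)}| < i. -/
/-- The tensor product `q ⊗ p`: `S ∈ q ⊗ p` iff `{m : {n : (m,n) ∈ S} ∈ p} ∈ q`. -/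
def tensor (q p : Ultrafilter ℕ) : Ultrafilter (ℕ × ℕ) :=
  q.bind fun m => p.map fun n => (m, n)

lemma my_ncard_prod {α β : Type*} (s : Set α) (t : Set β) :
    (s ×ˢ t).ncard = s.ncard * t.ncard := by
  rw [← Nat.card_coe_set_eq, Nat.card_congr (Equiv.Set.prod s t), Nat.card_prod,
    Nat.card_coe_set_eq, Nat.card_coe_set_eq]

lemma rapid_le_cofinite (p : Ultrafilter ℕ) (hp : Rapid p) :
    (p : Filter ℕ) ≤ Filter.cofinite := by
  rw [Filter.le_cofinite_iff_compl_singleton_mem]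
  intro a
  by_contra h
  have ha : {a} ∈ p := Ultrafilter.compl_notMem_iff.mp h
  obtain ⟨A, hAp, hA⟩ := hp (fun _ => a + 1)
  have haA : a ∈ A := by
    obtain ⟨x, hx1, hx2⟩ := Ultrafilter.nonempty_of_mem (p.inter_mem ha hAp)
    rwa [Set.mem_singleton_iff.mp hx1] at hx2
  have h1 : 0 < ((A : Set ℕ) ∩ Set.Iio (a + 1)).ncard := by
    rw [Set.ncard_pos ((Set.finite_Iio (a + 1)).inter_of_right A)]
    exact ⟨a, haA, by simp⟩
  exact absurd (hA 1 one_pos) (by omega)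

theorem stmt_2 (p q : Ultrafilter ℕ) (hp : Rapid p) :
    ∀ f : ℕ → ℕ, ∃ S ∈ tensor q p, ∀ i : ℕ, 0 < i →
      ((S : Set (ℕ × ℕ)) ∩ {z : ℕ × ℕ | z.1 + z.2 < f i}).ncard < i := by
  intro f
  have hpc := rapid_le_cofinite p hp
  set F : ℕ → ℕ := fun i => (Finset.range (i + 1)).sup f with hF
  have hFmono : Monotone F := fun a b hab =>
    Finset.sup_mono (Finset.range_subset_range.2 (by omega))
  have hfF : ∀ i, f i ≤ F i := fun i => Finset.le_sup (Finset.self_mem_range_succ i)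
  obtain ⟨A, hAp, hA⟩ := hp (fun j => F ((j + 1) * (j + 1)))
  -- the witness set
  set S : Set (ℕ × ℕ) := {z | z.2 ∈ A ∧ z.1 < (A ∩ Set.Iio z.2).ncard} with hS
  have hfinIio : ∀ n : ℕ, (A ∩ Set.Iio n).Finite := fun n =>
    (Set.finite_Iio n).inter_of_right A
  -- strict monotonicity of n ↦ |A ∩ [0,n)| on A
  have hmono : ∀ n₁ ∈ A, ∀ n₂ ∈ A, n₁ < n₂ →
      (A ∩ Set.Iio n₁).ncard < (A ∩ Set.Iio n₂).ncard := by
    intro n₁ h₁ n₂ h₂ hlt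
    refine Set.ncard_lt_ncard ?_ (hfinIio n₂)
    constructor
    · intro x hx; exact ⟨hx.1, lt_trans hx.2 hlt⟩
    · intro hsub
      have : n₁ ∈ A ∩ Set.Iio n₁ := hsub ⟨h₁, hlt⟩
      exact absurd this.2 (lt_irrefl n₁)
  have hSmem : S ∈ tensor q p := by
    have hcol : ∀ m : ℕ, {n | (m, n) ∈ S} ∈ p := by
      intro m
      set B : Set ℕ := {n | n ∈ A ∧ (A ∩ Set.Iio n).ncard ≤ m} with hB
      have hBfin : B.Finite := by
        have himg : (fun n => (A ∩ Set.Iio n).ncard) '' B ⊆ Set.Iic m := by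
          rintro _ ⟨n, hn, rfl⟩; exact hn.2
        refine Set.Finite.of_finite_image ((Set.finite_Iic m).subset himg) ?_
        intro n₁ h₁ n₂ h₂ heq
        by_contra hne
        rcases lt_or_gt_of_ne hne with hlt | hlt
        · exact absurd heq (Nat.ne_of_lt (hmono n₁ h₁.1 n₂ h₂.1 hlt))
        · exact absurd heq.symm (Nat.ne_of_lt (hmono n₂ h₂.1 n₁ h₁.1 hlt))
      have : A ∩ Bᶜ ∈ p := p.inter_mem hAp (hpc hBfin.compl_mem_cofinite)
      refine p.sets_of_superset this ?_
      intro n hn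
      simp only [Set.mem_setOf_eq, hS]
      refine ⟨hn.1, ?_⟩
      have := hn.2
      simp only [hB, Set.mem_compl_iff, Set.mem_setOf_eq, not_and, not_le] at this
      exact this hn.1
    show S ∈ (q.bind fun m => p.map fun n => (m, n))
    have : {m | S ∈ (p.map fun n => (m, n))} ∈ q := by
      have : {m | S ∈ (p.map fun n => (m, n))} = Set.univ := by
        ext m
        simp only [Set.mem_setOf_eq, Set.mem_univ, iff_true, Ultrafilter.mem_map]
        exact hcol m
      rw [this]; exact Filter.univ_mem
    exact this
  refine ⟨S, hSmem, ?_⟩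
  intro i hi
  set j := Nat.sqrt i with hj
  have hjpos : 0 < j := Nat.sqrt_pos.mpr hi
  set k := (A ∩ Set.Iio (f i)).ncard with hk
  have hkj : k < j := by
    have hle : f i ≤ F ((j + 1) * (j + 1)) :=
      le_trans (hfF i) (hFmono (le_of_lt (Nat.lt_succ_sqrt i)))
    calc k ≤ (A ∩ Set.Iio (F ((j + 1) * (j + 1)))).ncard := by
            refine Set.ncard_le_ncard ?_ (hfinIio _)
            exact Set.inter_subset_inter_right A (Set.Iio_subset_Iio hle)
      _ < j := hA j hjpos
  have hsub : (S : Set (ℕ × ℕ)) ∩ {z : ℕ × ℕ | z.1 + z.2 < f i} ⊆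
      Set.Iio k ×ˢ (A ∩ Set.Iio (f i)) := by
    rintro ⟨m, n⟩ ⟨⟨hnA, hm⟩, hz⟩
    simp only [Set.mem_setOf_eq] at hz
    have hnf : n < f i := by omega
    refine ⟨?_, hnA, hnf⟩
    show m < k
    calc m < (A ∩ Set.Iio n).ncard := hm
      _ ≤ k := Set.ncard_le_ncard
          (Set.inter_subset_inter_right A (Set.Iio_subset_Iio (le_of_lt hnf)))
          (hfinIio _)
  calc ((S : Set (ℕ × ℕ)) ∩ {z : ℕ × ℕ | z.1 + z.2 < f i}).ncard
      ≤ (Set.Iio k ×ˢ (A ∩ Set.Iio (f i))).ncard :=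
        Set.ncard_le_ncard hsub ((Set.finite_Iio k).prod (hfinIio _))
    _ = (Set.Iio k).ncard * k := by rw [my_ncard_prod]
    _ = k * k := by rw [← Finset.coe_range, Set.ncard_coe_finset, Finset.card_range]
    _ < j * j := Nat.mul_lt_mul_of_lt_of_lt hkj hkj
    _ ≤ i := Nat.sqrt_le i
end

section
/- If p is a rapid ultrafilter on ℕ and q is any ultrafilter on ℕ, then q + p is rapid, where q + p is the image of q ⊗ p under addition. -/
/-- `q + p` is the image of `q ⊗ p` under addition. -/
def addUF (q p : Ultrafilter ℕ) : Ultrafilter ℕ :=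
  (tensor q p).map fun z => z.1 + z.2

/-!
Given `f`, rapidity of `p` yields `B ∈ p` with fewer than `j` points below `max_{i < 2^j} f i`.
Replace each `n ∈ B` by the interval `[n, n + |B ∩ [0, n)|]`. Since `p` is nonprincipal, for
every `m` almost every `n ∈ B` has rank at least `m`, so `m + n` lies in `A := blowUp B`; hence
`A ∈ q + p` whatever `q` is. Below `N` the set `A` is covered by intervals of lengths `1, …, t`,
where `t = |B ∩ [0, N)|`, so it has fewer than `2^t` points; for `N = f i` the choice of `B`
forces `2^t ≤ i`.
-/

open Filter Set

theorem mem_addUF_iff {q p : Ultrafilter ℕ} {A : Set ℕ} :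
    A ∈ addUF q p ↔ {m | {n | m + n ∈ A} ∈ p} ∈ q :=
  Iff.rfl

theorem Rapid.le_cofinite {p : Ultrafilter ℕ} (hp : Rapid p) : (p : Filter ℕ) ≤ cofinite := by
  refine le_cofinite_iff_compl_singleton_mem.2 fun x => ?_
  obtain ⟨A, hA, hAx⟩ := hp fun _ => x + 1
  have hempty : A ∩ Iio (x + 1) = ∅ :=
    (ncard_eq_zero ((finite_Iio _).subset inter_subset_right)).1 (Nat.lt_one_iff.1 (hAx 1 one_pos))
  refine mem_of_superset hA fun n hn (hnx : n = x) => ?_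
  exact (eq_empty_iff_forall_notMem.1 hempty) n ⟨hn, by simp [hnx]⟩

theorem ncard_inter_Iio_eq_count (B : Set ℕ) [DecidablePred (· ∈ B)] (N : ℕ) :
    (B ∩ Iio N).ncard = Nat.count (· ∈ B) N := by
  rw [Nat.count_eq_card_filter_range, ← ncard_coe_finset]
  congr 1
  ext n
  simp [and_comm]

theorem tendsto_count_atTop {B : Set ℕ} [DecidablePred (· ∈ B)] (hB : B.Infinite) :
    Tendsto (Nat.count (· ∈ B)) atTop atTop :=
  (Nat.count_monotone _).tendsto_atTop_atTop fun m =>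
    ⟨Nat.nth (· ∈ B) m, (Nat.count_nth_of_infinite (p := (· ∈ B)) hB m).ge⟩

def blowUp (B : Set ℕ) [DecidablePred (· ∈ B)] : Set ℕ :=
  {k | ∃ n ∈ B, n ≤ k ∧ k ≤ n + Nat.count (· ∈ B) n}

section blowUp

variable {B : Set ℕ} [DecidablePred (· ∈ B)]

theorem setOf_add_mem_blowUp_mem {p : Ultrafilter ℕ} (hp : (p : Filter ℕ) ≤ cofinite)
    (hB : B ∈ p) (m : ℕ) : {n | m + n ∈ blowUp B} ∈ p := by
  have hBinf : B.Infinite := fun hfin =>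
    Ultrafilter.compl_notMem_iff.2 hB (hp hfin.compl_mem_cofinite)
  have hcount : {n | m ≤ Nat.count (· ∈ B) n} ∈ p :=
    hp <| Nat.cofinite_eq_atTop ▸ (tendsto_count_atTop hBinf).eventually_ge_atTop m
  exact Filter.mem_of_superset (inter_mem hB hcount) fun n ⟨hnB, hmn⟩ =>
    ⟨n, hnB, Nat.le_add_left n m, (add_comm m n).trans_le (Nat.add_le_add_left hmn n)⟩

theorem ncard_blowUp_inter_Iio_lt (N : ℕ) :
    (blowUp B ∩ Iio N).ncard < 2 ^ Nat.count (· ∈ B) N := by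
  set s := (Finset.range N).filter (· ∈ B)
  set c := Nat.count (· ∈ B)
  have hcover : blowUp B ∩ Iio N ⊆ ↑(s.biUnion fun n => Finset.Icc n (n + c n)) := by
    rintro k ⟨⟨n, hnB, hnk, hkn⟩, hkN : k < N⟩
    exact Finset.mem_biUnion.2
      ⟨n, Finset.mem_filter.2 ⟨Finset.mem_range.2 (hnk.trans_lt hkN), hnB⟩,
        Finset.mem_Icc.2 ⟨hnk, hkn⟩⟩
  calc (blowUp B ∩ Iio N).ncard
      ≤ (s.biUnion fun n => Finset.Icc n (n + c n)).card :=
        (ncard_le_ncard hcover).trans_eq (ncard_coe_finset _)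
    _ ≤ ∑ n ∈ s, (c n + 1) :=
        Finset.card_biUnion_le.trans (Finset.sum_le_sum fun n _ => by rw [Nat.card_Icc]; omega)
    _ ≤ ∑ n ∈ s, 2 ^ c n := Finset.sum_le_sum fun n _ => Nat.lt_two_pow_self
    _ = ∑ j ∈ s.image c, 2 ^ j := (Finset.sum_image fun a ha b hb =>
        Nat.count_injective (Finset.mem_filter.1 ha).2 (Finset.mem_filter.1 hb).2).symm
    _ ≤ ∑ j ∈ Finset.range (c N), 2 ^ j := by
        refine Finset.sum_le_sum_of_subset (Finset.image_subset_iff.2 fun n hn => ?_)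
        obtain ⟨hnN, hnB⟩ := Finset.mem_filter.1 hn
        exact Finset.mem_range.2 (Nat.count_strict_mono hnB (Finset.mem_range.1 hnN))
    _ < 2 ^ c N := by
        rw [Nat.geomSum_eq le_rfl]
        simp

end blowUp

theorem stmt_3 (p q : Ultrafilter ℕ) (hp : Rapid p) : Rapid (addUF q p) := by
  classical
  intro f
  obtain ⟨B, hBp, hB⟩ := hp fun j => (Finset.range (2 ^ j)).sup f
  refine ⟨blowUp B, ?_, fun i hi => ?_⟩
  · exact mem_addUF_iff.2 <| univ_mem' fun m => setOf_add_mem_blowUp_mem hp.le_cofinite hBp m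
  · set t := Nat.count (· ∈ B) (f i)
    suffices 2 ^ t ≤ i from (ncard_blowUp_inter_Iio_lt (f i)).trans_le this
    by_contra! hit
    have ht : 0 < t := Nat.pos_of_ne_zero fun h0 => by rw [h0, pow_zero] at hit; omega
    have hfi : f i ≤ (Finset.range (2 ^ t)).sup f := Finset.le_sup (Finset.mem_range.2 hit)
    have hsparse := hB t ht
    rw [ncard_inter_Iio_eq_count] at hsparse
    exact (Nat.count_monotone _ hfi).not_gt hsparse
end

section
/- Let (x_n) be a sequence in ℕ (of positive terms) such that the map from nonempty finite subsets s of ℕ to ℕ given by s ↦ ∑_{n∈s} x_n is injective and satisfies: a sum over s plus a sum over t equals a sum over v iff s and t are disjoint with s ∪ t = v. If (y_k) is a sequence such that every finite sum of distinct y_k lies in FS(x_n), then the analogous injectivity and disjoint-union properties hold for (y_k). -/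
/-!
Write each `y k` as a sum `∑_{n ∈ T k} x n` with `T k` nonempty. Applying the disjoint-union
property of `x` to `y k + y l`, a sum over `x`, shows that the `T k` are pairwise disjoint, so
`∑_{k ∈ s} y k = ∑_{n ∈ ⋃_{k ∈ s} T k} x n`. The map `s ↦ ⋃_{k ∈ s} T k` is injective and
preserves disjointness and unions, so both properties pass from `x` to `y`.
-/

open Finset Function

namespace Finset

variable {ι α : Type*} [DecidableEq α] {T : ι → Finset α}

theorem biUnion_injective_of_pairwise_disjoint (hT : Pairwise (Disjoint on T))
    (hne : ∀ i, (T i).Nonempty) : Injective fun s : Finset ι => s.biUnion T := by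
  intro s t hst
  have hT' : Pairwise (Disjoint on fun i => (T i : Set α)) :=
    fun i j hij => disjoint_coe.2 (hT hij)
  apply coe_injective
  refine hT'.biUnion_injective (fun i => coe_nonempty.2 (hne i)) ?_
  simpa only [← coe_biUnion] using congrArg ((↑) : Finset α → Set α) hst

theorem disjoint_biUnion_biUnion_iff (hT : Pairwise (Disjoint on T))
    (hne : ∀ i, (T i).Nonempty) {s t : Finset ι} :
    Disjoint (s.biUnion T) (t.biUnion T) ↔ Disjoint s t := by
  simp_rw [disjoint_biUnion_left, disjoint_biUnion_right]
  constructor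
  · refine fun h => disjoint_left.2 fun i his hit => ?_
    exact (hne i).ne_empty (disjoint_self.1 (h i his i hit))
  · intro h i his j hjt
    exact hT (disjoint_left.1 h his <| · ▸ hjt)

end Finset

section FiniteSums

variable {ι M : Type*} [DecidableEq ι] [AddCommMonoid M] {x y : ι → M}

theorem exists_pairwise_disjoint_sum_eq_sum_biUnion
    (hadd : ∀ s t v : Finset ι, s.Nonempty → t.Nonempty → v.Nonempty →
      s.sum x + t.sum x = v.sum x → Disjoint s t)
    (hy : ∀ u : Finset ι, u.Nonempty → ∃ t : Finset ι, t.Nonempty ∧ u.sum y = t.sum x) :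
    ∃ T : ι → Finset ι, Pairwise (Disjoint on T) ∧ (∀ k, (T k).Nonempty) ∧
      ∀ s : Finset ι, s.sum y = (s.biUnion T).sum x := by
  choose T hTne hT using fun k => hy {k} (singleton_nonempty k)
  simp only [sum_singleton] at hT
  have hdisj : Pairwise (Disjoint on T) := by
    intro k l hkl
    obtain ⟨t, ht, hsum⟩ := hy {k, l} (insert_nonempty k {l})
    rw [sum_pair hkl, hT, hT] at hsum
    exact hadd _ _ _ (hTne k) (hTne l) ht hsum
  refine ⟨T, hdisj, hTne, fun s => ?_⟩
  rw [sum_biUnion (hdisj.set_pairwise _)]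
  exact sum_congr rfl fun k _ => hT k

end FiniteSums

theorem stmt_5_general (x y : ℕ → ℕ)
    (hinj : ∀ s t : Finset ℕ, s.Nonempty → t.Nonempty →
      (s.sum x = t.sum x ↔ s = t))
    (hadd : ∀ s t v : Finset ℕ, s.Nonempty → t.Nonempty → v.Nonempty →
      (s.sum x + t.sum x = v.sum x ↔ Disjoint s t ∧ s ∪ t = v))
    (hy : ∀ u : Finset ℕ, u.Nonempty →
      ∃ t : Finset ℕ, t.Nonempty ∧ u.sum y = t.sum x) :
    (∀ s t : Finset ℕ, s.Nonempty → t.Nonempty →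
      (s.sum y = t.sum y ↔ s = t)) ∧
    (∀ s t v : Finset ℕ, s.Nonempty → t.Nonempty → v.Nonempty →
      (s.sum y + t.sum y = v.sum y ↔ Disjoint s t ∧ s ∪ t = v)) := by
  obtain ⟨T, hdisj, hTne, hsum⟩ := exists_pairwise_disjoint_sum_eq_sum_biUnion
    (fun s t v hs ht hv h => ((hadd s t v hs ht hv).1 h).1) hy
  have hinjT := biUnion_injective_of_pairwise_disjoint hdisj hTne
  have hne : ∀ s : Finset ℕ, s.Nonempty → (s.biUnion T).Nonempty :=
    fun s hs => hs.biUnion fun k _ => hTne k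
  refine ⟨fun s t hs ht => ?_, fun s t v hs ht hv => ?_⟩
  · rw [hsum, hsum, hinj _ _ (hne s hs) (hne t ht), hinjT.eq_iff]
  · rw [hsum, hsum, hsum, hadd _ _ _ (hne s hs) (hne t ht) (hne v hv),
      disjoint_biUnion_biUnion_iff hdisj hTne, ← union_biUnion, hinjT.eq_iff]

theorem stmt_5 (x y : ℕ → ℕ) (hxpos : ∀ n, 0 < x n)
    (hinj : ∀ s t : Finset ℕ, s.Nonempty → t.Nonempty →
      (s.sum x = t.sum x ↔ s = t))
    (hadd : ∀ s t v : Finset ℕ, s.Nonempty → t.Nonempty → v.Nonempty →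
      (s.sum x + t.sum x = v.sum x ↔ Disjoint s t ∧ s ∪ t = v))
    (hy : ∀ u : Finset ℕ, u.Nonempty →
      ∃ t : Finset ℕ, t.Nonempty ∧ u.sum y = t.sum x) :
    (∀ s t : Finset ℕ, s.Nonempty → t.Nonempty →
      (s.sum y = t.sum y ↔ s = t)) ∧
    (∀ s t v : Finset ℕ, s.Nonempty → t.Nonempty → v.Nonempty →
      (s.sum y + t.sum y = v.sum y ↔ Disjoint s t ∧ s ∪ t = v)) :=
  stmt_5_general x y hinj hadd hy
end

section
/- Let (x_n) be a strictly increasing sequence in ℕ and f : ℕ → ℕ strictly monotone. Suppose the sequence of values (x_k) dominates f ∘ (k ↦ 2^{k+1}), i.e. x_k > f(2^{k+1}) for all k. Then for every i, the set FS(x_n) ∩ [0, f(i)) has fewer than i elements. -/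
/-- `FS(x_n)`: the set of finite sums over nonempty finite index sets. -/
def FS (x : ℕ → ℕ) : Set ℕ :=
  {m | ∃ s : Finset ℕ, s.Nonempty ∧ s.sum x = m}

/-- A sum below `b` only involves generators below `b`. -/
theorem FS_inter_Iio_subset {x : ℕ → ℕ} {b n : ℕ} (hn : ∀ k, x k < b → k < n) :
    FS x ∩ Set.Iio b ⊆ (((Finset.range n).powerset.erase ∅).image (·.sum x) : Set ℕ) := by
  rintro m ⟨⟨s, hs, rfl⟩, hm⟩
  simp only [Finset.coe_image, Set.mem_image, Finset.mem_coe, Finset.mem_erase,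
    Finset.mem_powerset]
  refine ⟨s, ⟨hs.ne_empty, fun k hk => Finset.mem_range.mpr (hn k ?_)⟩, rfl⟩
  exact (Finset.single_le_sum (fun _ _ => Nat.zero_le _) hk).trans_lt hm

theorem ncard_FS_inter_Iio_lt_two_pow {x : ℕ → ℕ} {b n : ℕ} (hn : ∀ k, x k < b → k < n) :
    (FS x ∩ Set.Iio b).ncard < 2 ^ n :=
  calc (FS x ∩ Set.Iio b).ncard
      ≤ (((Finset.range n).powerset.erase ∅).image (·.sum x)).card :=
        (Set.ncard_le_ncard (FS_inter_Iio_subset hn) (Finset.finite_toSet _)).trans_eq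
          (Set.ncard_coe_finset _)
    _ ≤ ((Finset.range n).powerset.erase ∅).card := Finset.card_image_le
    _ < 2 ^ n := by
        rw [Finset.card_erase_of_mem (Finset.empty_mem_powerset _), Finset.card_powerset,
          Finset.card_range]
        exact Nat.sub_lt (Nat.two_pow_pos n) one_pos

theorem stmt_7_general (x : ℕ → ℕ) (f : ℕ → ℕ) (hf : StrictMono f)
    (hdom : ∀ k : ℕ, f (2 ^ (k + 1)) < x k) :
    ∀ i : ℕ, 0 < i → (FS x ∩ Set.Iio (f i)).ncard < i := by
  intro i hi
  have hindex : ∀ k, x k < f i → k < Nat.log 2 i := by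
    intro k hk
    have h2k : 2 ^ (k + 1) < i := hf.lt_iff_lt.mp ((hdom k).trans hk)
    exact Nat.lt_of_succ_le ((Nat.le_log_iff_pow_le one_lt_two hi.ne').mpr h2k.le)
  exact (ncard_FS_inter_Iio_lt_two_pow hindex).trans_le (Nat.pow_log_le_self 2 hi.ne')

theorem stmt_7 (x : ℕ → ℕ) (hx : StrictMono x) (f : ℕ → ℕ) (hf : StrictMono f)
    (hdom : ∀ k : ℕ, f (2 ^ (k + 1)) < x k) :
    ∀ i : ℕ, 0 < i → (FS x ∩ Set.Iio (f i)).ncard < i :=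
  stmt_7_general x f hf hdom
end

section
/- Let (x_n) be a sequence in ℕ such that finite sums behave like disjoint unions (sums over index sets s and t add to the sum over v iff s, t are disjoint with union v, and equal sums force equal index sets). If (y_k) is a sequence with FS(y_k) ⊆ FS(x_n), write each y_k = ∑_{n∈s_k} x_n; then the index sets s_k are pairwise disjoint, and consequently, writing x_n-max(∑_{n∈s} x_n) = x_{max(s)}, the image of FS(y_k) under x_n-max equals the image of the set of generators {y_k : k ∈ ℕ} under x_n-max. -/
/-- The image of a set `A ⊆ FS(x_n)` under the map `∑_{n∈t} x_n ↦ x_{max t}`. -/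
def xmaxImage (x : ℕ → ℕ) (A : Set ℕ) : Set ℕ :=
  {a | ∃ t : Finset ℕ, ∃ ht : t.Nonempty, t.sum x ∈ A ∧ a = x (t.max' ht)}

theorem stmt_10 (x y : ℕ → ℕ)
    (hinj : ∀ s t : Finset ℕ, s.Nonempty → t.Nonempty →
      (s.sum x = t.sum x ↔ s = t))
    (hadd : ∀ s t v : Finset ℕ, s.Nonempty → t.Nonempty → v.Nonempty →
      (s.sum x + t.sum x = v.sum x ↔ Disjoint s t ∧ s ∪ t = v))
    (hFS : FS y ⊆ FS x)
    (s : ℕ → Finset ℕ) (hs : ∀ k, (s k).Nonempty ∧ y k = (s k).sum x) :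
    (∀ k l : ℕ, k ≠ l → Disjoint (s k) (s l)) ∧
    xmaxImage x (FS y) = xmaxImage x (Set.range y) := by
  have disj : ∀ k l : ℕ, k ≠ l → Disjoint (s k) (s l) := by
    intro k l hkl
    have h1 : y k + y l ∈ FS y :=
      ⟨{k, l}, ⟨k, by simp⟩, by rw [Finset.sum_pair hkl]⟩
    obtain ⟨v, hv, hve⟩ := hFS h1
    exact ((hadd (s k) (s l) v (hs k).1 (hs l).1 hv).mp
      (by rw [← (hs k).2, ← (hs l).2, hve])).1
  refine ⟨disj, Set.Subset.antisymm ?_ ?_⟩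
  · rintro a ⟨t, ht, htFS, ha⟩
    obtain ⟨u, hu, hue⟩ := htFS
    have hb : (u.biUnion s).sum x = u.sum y := by
      rw [Finset.sum_biUnion (fun k _ l _ hkl => disj k l hkl)]
      exact Finset.sum_congr rfl fun k _ => ((hs k).2).symm
    obtain ⟨k0, hk0⟩ := hu
    have hbn : (u.biUnion s).Nonempty := by
      obtain ⟨n, hn⟩ := (hs k0).1
      exact ⟨n, Finset.mem_biUnion.mpr ⟨k0, hk0, hn⟩⟩
    have ht' : t = u.biUnion s :=
      (hinj t _ ht hbn).mp (by rw [hb, hue])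
    have hmem : t.max' ht ∈ u.biUnion s := ht' ▸ t.max'_mem ht
    obtain ⟨k, hku, hks⟩ := Finset.mem_biUnion.mp hmem
    refine ⟨s k, (hs k).1, ⟨k, (hs k).2⟩, ?_⟩
    rw [ha]
    congr 1
    apply le_antisymm
    · exact Finset.le_max' _ _ hks
    · exact Finset.max'_subset _ (fun n hn => ht' ▸ Finset.mem_biUnion.mpr ⟨k, hku, hn⟩)
  · rintro a ⟨t, ht, ⟨k, hk⟩, ha⟩
    exact ⟨t, ht, ⟨{k}, ⟨k, Finset.mem_singleton_self k⟩, by simp [hk]⟩, ha⟩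
end

section
/- If p and q are ultrafilters on ℕ and p is rapid, then for every f : ℕ → ℕ there exist V ∈ q and, for each v ∈ V, a set W_v ∈ p, such that the set ⋃_{v∈V} {v} × W_v, viewed via the sum map (v,w) ↦ v + w, meets [0, f(i)) in fewer than i points for every i. -/
theorem stmt_12 (p q : Ultrafilter ℕ) (hp : Rapid p) :
    ∀ f : ℕ → ℕ, ∃ V ∈ q, ∃ W : ℕ → Set ℕ, (∀ v ∈ V, W v ∈ p) ∧
      ∀ i : ℕ, 0 < i →
        ({z : ℕ × ℕ | z.1 ∈ V ∧ z.2 ∈ W z.1 ∧ z.1 + z.2 < f i}).ncard < i := by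
  intro f
  -- Step 0: every tail Ici m belongs to p (p is nonprincipal-like because it's rapid)
  have htail : ∀ m : ℕ, Set.Ici m ∈ p := by
    intro m
    obtain ⟨A, hA, hAc⟩ := hp (fun _ => m)
    have h1 := hAc 1 one_pos
    have hfin : (A ∩ Set.Iio m).Finite := (Set.finite_Iio m).inter_of_right _
    have hempty : A ∩ Set.Iio m = ∅ := by
      rw [← Set.ncard_eq_zero hfin]; omega
    have hsub : A ⊆ Set.Ici m := by
      intro a ha
      by_contra h
      have : a ∈ A ∩ Set.Iio m := ⟨ha, by simpa using h⟩
      simp [hempty] at this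
    exact p.toFilter.mem_of_superset hA hsub
  -- F : monotone majorant of f
  set F : ℕ → ℕ := fun i => ∑ k ∈ Finset.range (i + 1), f k with hF
  have hFmono : Monotone F := fun a b hab =>
    Finset.sum_le_sum_of_subset (Finset.range_subset_range.2 (by omega))
  have hfF : ∀ i, f i ≤ F i := fun i =>
    Finset.single_le_sum (fun k _ => Nat.zero_le (f k)) (Finset.self_mem_range_succ i)
  -- triangular numbers
  set T : ℕ → ℕ := fun m => ∑ k ∈ Finset.range m, (k + 1) with hT
  have hTmono : Monotone T := fun a b hab =>
    Finset.sum_le_sum_of_subset (Finset.range_subset_range.2 hab)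
  have hTsucc : ∀ m, T (m + 1) = T m + (m + 1) := fun m => Finset.sum_range_succ _ m
  have hTge : ∀ m, m ≤ T m := by
    intro m
    calc m = ∑ k ∈ Finset.range m, 1 := by simp
    _ ≤ T m := Finset.sum_le_sum (fun k _ => by omega)
  -- rapid set for g = F ∘ T
  obtain ⟨A, hA, hAc⟩ := hp (fun j => F (T j))
  set idx : ℕ → ℕ := fun w => (A ∩ Set.Iio w).ncard with hidx
  have hidxfin : ∀ w, (A ∩ Set.Iio w).Finite := fun w => (Set.finite_Iio w).inter_of_right _
  have hidxmono : ∀ ⦃w w'⦄, w ∈ A → w' ∈ A → w < w' → idx w < idx w' := by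
    intro w w' hw hw' hlt
    have hins : insert w (A ∩ Set.Iio w) ⊆ A ∩ Set.Iio w' := by
      rintro x (rfl | ⟨hx1, hx2⟩)
      · exact ⟨hw, hlt⟩
      · exact ⟨hx1, lt_trans hx2 hlt⟩
    have := Set.ncard_le_ncard hins (hidxfin w')
    rwa [Set.ncard_insert_of_notMem (by simp) (hidxfin w)] at this
  -- for each v there is m with v ≤ idx m
  have hunb : ∀ v : ℕ, ∃ m, v ≤ idx m := by
    intro v
    induction v with
    | zero => exact ⟨0, Nat.zero_le _⟩
    | succ v ih =>
      obtain ⟨m, hm⟩ := ih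
      have hmem : A ∩ Set.Ici m ∈ p := p.toFilter.inter_mem hA (htail m)
      obtain ⟨a, ha, ham⟩ := Ultrafilter.nonempty_of_mem hmem
      have ham' : m ≤ a := Set.mem_Ici.1 ham
      refine ⟨a + 1, ?_⟩
      have hins : insert a (A ∩ Set.Iio m) ⊆ A ∩ Set.Iio (a + 1) := by
        rintro x (rfl | ⟨hx1, hx2⟩)
        · exact ⟨ha, Set.mem_Iio.2 (by omega)⟩
        · have := Set.mem_Iio.1 hx2
          exact ⟨hx1, Set.mem_Iio.2 (by omega)⟩
      have h2 : (insert a (A ∩ Set.Iio m)).ncard ≤ idx (a + 1) :=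
        Set.ncard_le_ncard hins (hidxfin (a + 1))
      have h3 : (insert a (A ∩ Set.Iio m)).ncard = idx m + 1 :=
        Set.ncard_insert_of_notMem
          (by simp only [Set.mem_inter_iff, Set.mem_Iio]; omega) (hidxfin m)
      omega
  -- the witnesses
  refine ⟨Set.univ, Filter.univ_mem, fun v => A ∩ {w | v ≤ idx w}, ?_, ?_⟩
  · intro v _
    obtain ⟨m, hm⟩ := hunb v
    have hsub : A ∩ Set.Ici m ⊆ A ∩ {w | v ≤ idx w} := by
      rintro x ⟨hx1, hx2⟩
      refine ⟨hx1, le_trans hm (Set.ncard_le_ncard ?_ (hidxfin x))⟩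
      exact Set.inter_subset_inter_right _ (Set.Iio_subset_Iio hx2)
    exact p.toFilter.mem_of_superset (p.toFilter.inter_mem hA (htail m)) hsub
  · intro i hi
    -- choose j minimal with i ≤ T j
    have hex : ∃ n, i ≤ T n := ⟨i, hTge i⟩
    set j := Nat.find hex with hj
    have hij : i ≤ T j := Nat.find_spec hex
    have hjmin : ∀ k < j, T k < i := fun k hk => by
      have := Nat.find_min hex hk; omega
    have hj1 : 1 ≤ j := by
      rcases Nat.eq_zero_or_pos j with h | h
      · exfalso; rw [h] at hij; simp [hT] at hij; omega
      · exact h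
    have hc := hAc j hj1
    set c := (A ∩ Set.Iio (F (T j))).ncard with hcdef
    -- for w ∈ A with w < f i, idx w < c
    have hidxlt : ∀ w, w ∈ A → w < f i → idx w + 1 ≤ c := by
      intro w hw hwf
      have hwlt : w < F (T j) :=
        lt_of_lt_of_le hwf (le_trans (hfF i) (hFmono (le_trans hij (le_refl _))))
      have hins : insert w (A ∩ Set.Iio w) ⊆ A ∩ Set.Iio (F (T j)) := by
        rintro x (rfl | ⟨hx1, hx2⟩)
        · exact ⟨hw, hwlt⟩
        · exact ⟨hx1, lt_trans hx2 hwlt⟩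
      have := Set.ncard_le_ncard hins ((Set.finite_Iio _).inter_of_right _)
      rwa [Set.ncard_insert_of_notMem (by simp) (hidxfin w)] at this
    -- the pair set
    set S : Set (ℕ × ℕ) := {z : ℕ × ℕ | z.1 ∈ Set.univ ∧
      z.2 ∈ A ∩ {w | z.1 ≤ idx w} ∧ z.1 + z.2 < f i} with hS
    set ψ : ℕ × ℕ → ℕ := fun z => T (idx z.2) + z.1 with hψ
    have hmemS : ∀ z ∈ S, z.2 ∈ A ∧ z.1 ≤ idx z.2 ∧ z.2 < f i := by
      rintro z ⟨-, ⟨hzA, hzi⟩, hzs⟩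
      exact ⟨hzA, hzi, by omega⟩
    have hinj : Set.InjOn ψ S := by
      intro z hz z' hz' heq
      obtain ⟨hzA, hzi, -⟩ := hmemS z hz
      obtain ⟨hzA', hzi', -⟩ := hmemS z' hz'
      have heq' : T (idx z.2) + z.1 = T (idx z'.2) + z'.1 := heq
      have key : ∀ a b : ℕ × ℕ, a.1 ≤ idx a.2 → idx a.2 < idx b.2 →
          T (idx a.2) + a.1 < T (idx b.2) := by
        intro a b h1 h2
        calc T (idx a.2) + a.1 ≤ T (idx a.2) + idx a.2 := by omega
        _ < T (idx a.2 + 1) := by rw [hTsucc]; omega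
        _ ≤ T (idx b.2) := hTmono h2
      have hkk : idx z.2 = idx z'.2 := by
        by_contra hne
        rcases Nat.lt_or_ge (idx z.2) (idx z'.2) with h | h
        · have := key z z' hzi h
          omega
        · have h3 : idx z'.2 < idx z.2 := by omega
          have := key z' z hzi' h3
          omega
      have h1 : z.1 = z'.1 := by rw [hkk] at heq'; omega
      have h2 : z.2 = z'.2 := by
        by_contra hne
        rcases Nat.lt_or_ge z.2 z'.2 with h | h
        · have := hidxmono hzA hzA' h; omega
        · have h3 : z'.2 < z.2 := by omega
          have := hidxmono hzA' hzA h3; omega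
      exact Prod.ext h1 h2
    -- image is contained in Iio (T (j-1))
    have himg : ψ '' S ⊆ Set.Iio (T (j - 1)) := by
      rintro x ⟨z, hz, rfl⟩
      obtain ⟨hzA, hzi, hzf⟩ := hmemS z hz
      have h1 : idx z.2 + 1 ≤ c := hidxlt z.2 hzA hzf
      have h2 : ψ z < T (idx z.2 + 1) := by
        have := hTsucc (idx z.2); simp only [hψ]; omega
      have h3 : T (idx z.2 + 1) ≤ T (j - 1) := hTmono (by omega)
      exact lt_of_lt_of_le h2 h3
    have hcard : S.ncard = (ψ '' S).ncard := (Set.ncard_image_of_injOn hinj).symm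
    have h4 : (ψ '' S).ncard ≤ (Set.Iio (T (j - 1))).ncard :=
      Set.ncard_le_ncard himg (Set.finite_Iio _)
    have h5 : (Set.Iio (T (j - 1))).ncard = T (j - 1) := by
      rw [show Set.Iio (T (j - 1)) = ↑(Finset.range (T (j - 1))) by
        ext x; simp [Finset.mem_range]]
      rw [Set.ncard_coe_finset, Finset.card_range]
    have h6 : T (j - 1) < i := hjmin (j - 1) (by omega)
    calc S.ncard = (ψ '' S).ncard := hcard
    _ ≤ T (j - 1) := by omega
    _ < i := h6
end
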